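/- In the ODE system of the previous statement with x₀ > R₂/(R₁+R₂), the limit z_∞ = lim_{t→∞} z(t) exists and satisfies z_∞ ≥ z₀ exp(R₂ y₀ / C) > 0, where C = R₂ − x₀(R₁+R₂) < 0. -/

import Mathlib

/-! Since `x` increases and `z` decreases, `y' = y (R₂ z - R₁ x) ≤ (R₂ z₀ - R₁ x₀) y ≤ C y`,
so `y t ≤ y₀ e^{C t}`. Then `z' = -R₂ y z ≥ -R₂ y₀ e^{C t} z`, and Grönwall gives
`z t ≥ z₀ exp (R₂ y₀ (1 - e^{C t}) / C) ≥ z₀ exp (R₂ y₀ / C)` because `C < 0`.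
A decreasing function bounded below has a limit, which inherits the bound. -/

open Real Set Filter Topology

section Comparison

variable {f f' g G : ℝ → ℝ} {a : ℝ}

lemma monotoneOn_Ici_of_hasDerivAt (hf : ∀ t ≥ a, HasDerivAt f (f' t) t)
    (hf' : ∀ t > a, 0 ≤ f' t) : MonotoneOn f (Ici a) := by
  refine monotoneOn_of_hasDerivWithinAt_nonneg (f' := f') (convex_Ici a)
    (fun t ht => (hf t ht).continuousAt.continuousWithinAt) ?_ ?_ <;> rw [interior_Ici]
  · exact fun t ht => (hf t (le_of_lt ht)).hasDerivWithinAt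
  · exact hf'

lemma antitoneOn_Ici_of_hasDerivAt (hf : ∀ t ≥ a, HasDerivAt f (f' t) t)
    (hf' : ∀ t > a, f' t ≤ 0) : AntitoneOn f (Ici a) := by
  have := monotoneOn_Ici_of_hasDerivAt (fun t ht => (hf t ht).neg) fun t ht =>
    neg_nonneg.2 (hf' t ht)
  exact fun s hs t ht hst => neg_le_neg_iff.1 (this hs ht hst)

lemma le_mul_exp_sub_of_hasDerivAt (hf : ∀ t ≥ a, HasDerivAt f (f' t) t)
    (hG : ∀ t ≥ a, HasDerivAt G (g t) t) (hfg : ∀ t > a, f' t ≤ g t * f t) :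
    ∀ t ≥ a, f t ≤ f a * exp (G t - G a) := by
  -- the integrating factor `e^{-G}` makes `f e^{-G}` nonincreasing
  have hanti : AntitoneOn (fun t => f t * exp (-G t)) (Ici a) := by
    refine antitoneOn_Ici_of_hasDerivAt
      (fun t ht => (hf t ht).mul (hG t ht).neg.exp) fun t ht => ?_
    calc _ = (f' t - g t * f t) * exp (-G t) := by simp only [Pi.neg_apply]; ring
      _ ≤ 0 := mul_nonpos_of_nonpos_of_nonneg (sub_nonpos.2 (hfg t ht)) (exp_pos _).le
  intro t ht
  have h := hanti self_mem_Ici ht ht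
  calc f t = f t * exp (-G t) * exp (G t) := by rw [mul_assoc, ← exp_add]; simp
    _ ≤ f a * exp (-G a) * exp (G t) := by gcongr
    _ = f a * exp (G t - G a) := by rw [mul_assoc, ← exp_add]; ring_nf

lemma mul_exp_sub_le_of_hasDerivAt (hf : ∀ t ≥ a, HasDerivAt f (f' t) t)
    (hG : ∀ t ≥ a, HasDerivAt G (g t) t) (hfg : ∀ t > a, g t * f t ≤ f' t) :
    ∀ t ≥ a, f a * exp (G t - G a) ≤ f t := by
  intro t ht
  have := le_mul_exp_sub_of_hasDerivAt (f := fun t => -f t) (fun t ht => (hf t ht).neg) hG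
    (fun t ht => by linarith [hfg t ht]) t ht
  linarith

lemma le_mul_exp_of_hasDerivAt_le_mul {c : ℝ} (hf : ∀ t ≥ 0, HasDerivAt f (f' t) t)
    (hfc : ∀ t > 0, f' t ≤ c * f t) : ∀ t ≥ 0, f t ≤ f 0 * exp (c * t) := fun t ht => by
  simpa using le_mul_exp_sub_of_hasDerivAt (g := fun _ => c) (G := fun s => c * s) hf
    (fun s _ => ((hasDerivAt_id s).const_mul c).congr_deriv (mul_one c)) hfc t ht

lemma mul_exp_div_le_of_hasDerivAt {c k : ℝ} (hc : c < 0) (hk : 0 ≤ k) (hf0 : 0 ≤ f 0)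
    (hf : ∀ t ≥ 0, HasDerivAt f (f' t) t) (hfk : ∀ t > 0, -(k * exp (c * t)) * f t ≤ f' t) :
    ∀ t ≥ 0, f 0 * exp (k / c) ≤ f t := by
  intro t ht
  have hG : ∀ s : ℝ, HasDerivAt (fun s => -k / c * exp (c * s)) (-(k * exp (c * s))) s :=
    fun s => ((((hasDerivAt_id' s).const_mul c).exp).const_mul (-k / c)).congr_deriv
      (by field_simp [hc.ne])
  -- `k / c` is the total change of the primitive `-k e^{c s} / c` over `[0, ∞)`
  have hkc : k / c ≤ -k / c * exp (c * t) - -k / c * exp (c * 0) := by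
    have : 0 ≤ -k / c * exp (c * t) :=
      mul_nonneg (div_nonneg_of_nonpos (neg_nonpos.2 hk) hc.le) (exp_pos _).le
    rw [mul_zero, exp_zero, mul_one]
    linarith [neg_div c k]
  calc f 0 * exp (k / c) ≤ f 0 * exp (-k / c * exp (c * t) - -k / c * exp (c * 0)) := by
        gcongr
    _ ≤ f t := mul_exp_sub_le_of_hasDerivAt hf (fun s _ => hG s) hfk t ht

end Comparison

lemma AntitoneOn.exists_tendsto_atTop_of_forall_ge {f : ℝ → ℝ} {a m : ℝ}
    (hf : AntitoneOn f (Ici a)) (hm : ∀ t ≥ a, m ≤ f t) :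
    ∃ l, Tendsto f atTop (𝓝 l) ∧ m ≤ l := by
  set w : ℝ → ℝ := fun t => f (max t a)
  have hw : Antitone w := fun s t hst =>
    hf (le_max_right s a) (le_max_right t a) (max_le_max hst le_rfl)
  have hwm : ∀ t, m ≤ w t := fun t => hm _ (le_max_right t a)
  refine ⟨⨅ t, w t, (tendsto_atTop_ciInf hw ⟨m, ?_⟩).congr' ?_, le_ciInf hwm⟩
  · rintro _ ⟨t, rfl⟩
    exact hwm t
  · filter_upwards [eventually_ge_atTop a] with t ht
    simp [w, max_eq_left ht]

theorem stmt15_general (R₁ R₂ x₀ y₀ z₀ : ℝ) (x y z : ℝ → ℝ)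
    (hR1 : 0 < R₁) (hR2 : 0 < R₂)
    (hy0 : 0 < y₀) (hz0 : 0 < z₀)
    (hsum : x₀ + y₀ + z₀ = 1)
    (hx : ∀ t ≥ (0:ℝ), HasDerivAt x (R₁ * x t * y t) t)
    (hy : ∀ t ≥ (0:ℝ), HasDerivAt y (-(R₁ * x t * y t) + R₂ * y t * z t) t)
    (hz : ∀ t ≥ (0:ℝ), HasDerivAt z (-(R₂ * y t * z t)) t)
    (hxi : x 0 = x₀) (hyi : y 0 = y₀) (hzi : z 0 = z₀)
    (hpos : ∀ t ≥ (0:ℝ), 0 < x t ∧ 0 < y t ∧ 0 < z t)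
    (hbig : x₀ > R₂ / (R₁ + R₂)) :
    R₂ - x₀ * (R₁ + R₂) < 0 ∧
    ∃ zinf : ℝ, Tendsto z atTop (nhds zinf) ∧
      zinf ≥ z₀ * Real.exp (R₂ * y₀ / (R₂ - x₀ * (R₁ + R₂))) ∧ 0 < zinf := by
  set C := R₂ - x₀ * (R₁ + R₂)
  have hC : C < 0 := by linarith [(div_lt_iff₀ (by linarith : 0 < R₁ + R₂)).1 hbig]
  have hx_ge : ∀ t ≥ 0, x₀ ≤ x t := fun t ht => hxi ▸
    monotoneOn_Ici_of_hasDerivAt hx (fun s hs => by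
      obtain ⟨hxs, hys, -⟩ := hpos s hs.le; positivity) self_mem_Ici ht ht
  have hz_anti : AntitoneOn z (Ici 0) := antitoneOn_Ici_of_hasDerivAt hz fun s hs => by
    obtain ⟨-, hys, hzs⟩ := hpos s hs.le; nlinarith [mul_pos hys hzs]
  have hy_le : ∀ t ≥ 0, y t ≤ y₀ * exp (C * t) := by
    refine hyi ▸ le_mul_exp_of_hasDerivAt_le_mul hy fun s hs => ?_
    obtain ⟨-, hys, -⟩ := hpos s hs.le
    have hz_le : z s ≤ z₀ := hzi ▸ hz_anti self_mem_Ici hs.le hs.le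
    have hRy : 0 < R₁ * y s ∧ 0 < R₂ * y s := ⟨by positivity, by positivity⟩
    nlinarith [mul_nonneg (sub_nonneg.2 (hx_ge s hs.le)) hRy.1.le,
      mul_nonneg (sub_nonneg.2 hz_le) hRy.2.le, mul_pos hy0 hRy.2]
  have hz_ge : ∀ t ≥ 0, z₀ * exp (R₂ * y₀ / C) ≤ z t := by
    refine hzi ▸ mul_exp_div_le_of_hasDerivAt hC (by positivity) (hzi ▸ hz0.le) hz
      fun s hs => ?_
    obtain ⟨-, -, hzs⟩ := hpos s hs.le
    nlinarith [mul_le_mul_of_nonneg_left (hy_le s hs.le) (by positivity : 0 ≤ R₂ * z s)]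
  obtain ⟨zinf, hlim, hge⟩ := hz_anti.exists_tendsto_atTop_of_forall_ge hz_ge
  exact ⟨hC, zinf, hlim, hge, lt_of_lt_of_le (by positivity) hge⟩

theorem stmt15 (R₁ R₂ x₀ y₀ z₀ : ℝ) (x y z : ℝ → ℝ)
    (hR1 : 0 < R₁) (hR2 : 0 < R₂)
    (hx0 : 0 < x₀) (hy0 : 0 < y₀) (hz0 : 0 < z₀)
    (hsum : x₀ + y₀ + z₀ = 1)
    (hx : ∀ t ≥ (0:ℝ), HasDerivAt x (R₁ * x t * y t) t)
    (hy : ∀ t ≥ (0:ℝ), HasDerivAt y (-(R₁ * x t * y t) + R₂ * y t * z t) t)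
    (hz : ∀ t ≥ (0:ℝ), HasDerivAt z (-(R₂ * y t * z t)) t)
    (hxi : x 0 = x₀) (hyi : y 0 = y₀) (hzi : z 0 = z₀)
    (hpos : ∀ t ≥ (0:ℝ), 0 < x t ∧ 0 < y t ∧ 0 < z t)
    (hbig : x₀ > R₂ / (R₁ + R₂)) :
    R₂ - x₀ * (R₁ + R₂) < 0 ∧
    ∃ zinf : ℝ, Tendsto z atTop (nhds zinf) ∧
      zinf ≥ z₀ * Real.exp (R₂ * y₀ / (R₂ - x₀ * (R₁ + R₂))) ∧ 0 < zinf :=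
  stmt15_general R₁ R₂ x₀ y₀ z₀ x y z hR1 hR2 hy0 hz0 hsum hx hy hz hxi hyi hzi hpos hbig
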